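/- arXiv:2408.02122 — 2 statements merged into one kernel-verified Lean document; each statement's English description precedes it below -/
import Mathlib

section
/- ∫_{ℝ^d} | π̃(θ) − π̂(θ) | dθ ≤ 2M·h·∫_{ℝ^d} K(u)‖u‖_2 du / ( B^{−1} Σ_{i=1}^B L(θ_i) ). -/
/-!
Write `Kᵢ(x) = K((x - θᵢ)/h)`. Then `π̂` is the normalisation of `F = (∑ᵢ Kᵢ) L` and `π̃` that
of `G = ∑ᵢ Kᵢ L(θᵢ)`. Since `L` is `M`-Lipschitz, `|F - G| ≤ M ∑ᵢ Kᵢ(x) ‖x - θᵢ‖`, and the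
substitution `u = (x - θᵢ)/h` gives `‖F - G‖₁ ≤ B M h^{d+1} ∫ K(u)‖u‖` and `∫ G = h^d ∑ᵢ L(θᵢ)`.
Normalising at most doubles an `L¹` distance measured relative to the mass of `G`:
`∫ |G/∫G - F/∫F| ≤ 2 ‖F - G‖₁ / ∫ G`.
-/
open MeasureTheory Module

theorem integral_abs_div_integral_sub_div_integral_le {α : Type*} [MeasurableSpace α]
    {μ : Measure α} {f g : α → ℝ} (hf : Integrable f μ) (hg : Integrable g μ)
    (hf0 : 0 ≤ᵐ[μ] f) (hfpos : 0 < ∫ x, f x ∂μ) (hgpos : 0 < ∫ x, g x ∂μ) :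
    ∫ x, |g x / ∫ y, g y ∂μ - f x / ∫ y, f y ∂μ| ∂μ ≤
      2 * (∫ x, |f x - g x| ∂μ) / ∫ x, g x ∂μ := by
  set Z := ∫ x, f x ∂μ
  set z := ∫ x, g x ∂μ
  have hdiff : |Z - z| ≤ ∫ x, |f x - g x| ∂μ := by
    rw [← integral_sub hf hg]
    exact abs_integral_le_integral_abs
  have hpointwise : ∀ᵐ x ∂μ, |g x / z - f x / Z| ≤ |f x - g x| / z + f x * (|Z - z| / (z * Z)) := by
    filter_upwards [hf0] with x hx
    have : g x / z - f x / Z = (g x - f x) / z + f x * ((Z - z) / (z * Z)) := by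
      field_simp; ring
    rw [this]
    refine (abs_add_le _ _).trans_eq ?_
    rw [abs_div, abs_mul, abs_div, abs_of_pos hgpos, abs_of_nonneg hx,
      abs_of_pos (mul_pos hgpos hfpos), abs_sub_comm (g x)]
  have hdom_int : Integrable (fun x => |f x - g x| / z + f x * (|Z - z| / (z * Z))) μ :=
    ((hf.sub hg).abs.div_const _).add (hf.mul_const _)
  calc ∫ x, |g x / z - f x / Z| ∂μ
      ≤ ∫ x, (|f x - g x| / z + f x * (|Z - z| / (z * Z))) ∂μ :=
        integral_mono_of_nonneg (.of_forall fun _ => abs_nonneg _) hdom_int hpointwise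
    _ = ((∫ x, |f x - g x| ∂μ) + |Z - z|) / z := by
        rw [integral_add (f := fun x => |f x - g x| / z) ((hf.sub hg).abs.div_const _)
          (hf.mul_const _), integral_div, integral_mul_const]
        change (∫ x, |f x - g x| ∂μ) / z + Z * _ = _
        field_simp
    _ ≤ 2 * (∫ x, |f x - g x| ∂μ) / z := by
        gcongr
        linarith

section HaarScaling

variable {E F : Type*} [NormedAddCommGroup E] [NormedSpace ℝ E] [FiniteDimensional ℝ E]
  [MeasurableSpace E] [BorelSpace E] {μ : Measure E} [μ.IsAddHaarMeasure]
  [NormedAddCommGroup F]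

theorem MeasureTheory.Integrable.comp_inv_smul_sub {φ : E → F} (hφ : Integrable φ μ) (θ : E) {h : ℝ}
    (hh : h ≠ 0) : Integrable (fun x => φ (h⁻¹ • (x - θ))) μ :=
  (hφ.comp_smul (inv_ne_zero hh)).comp_sub_right θ

theorem integral_comp_inv_smul_sub [NormedSpace ℝ F] (φ : E → F) (θ : E) {h : ℝ} (hh : 0 ≤ h) :
    ∫ x, φ (h⁻¹ • (x - θ)) ∂μ = h ^ finrank ℝ E • ∫ u, φ u ∂μ := by
  rw [integral_sub_right_eq_self (fun y => φ (h⁻¹ • y)) θ,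
    Measure.integral_comp_inv_smul_of_nonneg μ φ hh]

end HaarScaling

section KernelSums

variable {E ι : Type*} [NormedAddCommGroup E] [NormedSpace ℝ E] [Fintype ι]

noncomputable def kernelSum (K : E → ℝ) (h : ℝ) (θ : ι → E) (x : E) : ℝ :=
  ∑ i, K (h⁻¹ • (x - θ i))

noncomputable def weightedKernelSum (K : E → ℝ) (h : ℝ) (θ : ι → E) (w : ι → ℝ) (x : E) : ℝ :=
  ∑ i, K (h⁻¹ • (x - θ i)) * w i

theorem kernelSum_mul_sub_weightedKernelSum {K L : E → ℝ} {h : ℝ} (θ : ι → E) (x : E) :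
    kernelSum K h θ x * L x - weightedKernelSum K h θ (L ∘ θ) x =
      ∑ i, K (h⁻¹ • (x - θ i)) * (L x - L (θ i)) := by
  simp only [kernelSum, weightedKernelSum, Function.comp_apply, Finset.sum_mul,
    ← Finset.sum_sub_distrib, mul_sub]

end KernelSums

section KernelSmoothing

variable {E : Type*} [NormedAddCommGroup E] [NormedSpace ℝ E] [FiniteDimensional ℝ E]
  [MeasurableSpace E] [BorelSpace E] {μ : Measure E} [μ.IsAddHaarMeasure]
  {ι : Type*} [Fintype ι] {K L : E → ℝ} {M h : ℝ}

theorem integrable_and_integral_abs_kernel_mul_sub_le (hK0 : ∀ u, 0 ≤ K u)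
    (hK : Integrable K μ) (hKmom : Integrable (fun u => K u * ‖u‖) μ) (hL : Measurable L)
    (hLlip : ∀ x y, |L x - L y| ≤ M * ‖x - y‖) (θ : E) (hh : 0 < h) :
    Integrable (fun x => K (h⁻¹ • (x - θ)) * (L x - L θ)) μ ∧
      ∫ x, |K (h⁻¹ • (x - θ)) * (L x - L θ)| ∂μ ≤
        M * (h ^ (finrank ℝ E + 1) * ∫ u, K u * ‖u‖ ∂μ) := by
  set φ : E → ℝ := fun x => M * (h * (K (h⁻¹ • (x - θ)) * ‖h⁻¹ • (x - θ)‖))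
  have hφ_int : Integrable φ μ := ((hKmom.comp_inv_smul_sub θ hh.ne').const_mul h).const_mul M
  have hbound : ∀ x, |K (h⁻¹ • (x - θ)) * (L x - L θ)| ≤ φ x := by
    intro x
    have hscale : h * ‖h⁻¹ • (x - θ)‖ = ‖x - θ‖ := by
      rw [norm_smul, norm_inv, Real.norm_of_nonneg hh.le, mul_inv_cancel_left₀ hh.ne']
    calc |K (h⁻¹ • (x - θ)) * (L x - L θ)| = K (h⁻¹ • (x - θ)) * |L x - L θ| := by
          rw [abs_mul, abs_of_nonneg (hK0 _)]
      _ ≤ K (h⁻¹ • (x - θ)) * (M * ‖x - θ‖) := by gcongr; exacts [hK0 _, hLlip x θ]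
      _ = φ x := by rw [← hscale]; ring
  refine ⟨hφ_int.mono' ?_ (.of_forall hbound), ?_⟩
  · exact (hK.comp_inv_smul_sub θ hh.ne').aestronglyMeasurable.mul
      (hL.sub_const _).aestronglyMeasurable
  · calc ∫ x, |K (h⁻¹ • (x - θ)) * (L x - L θ)| ∂μ ≤ ∫ x, φ x ∂μ :=
          integral_mono_of_nonneg (.of_forall fun _ => abs_nonneg _) hφ_int (.of_forall hbound)
      _ = _ := by
          rw [integral_const_mul, integral_const_mul,
            integral_comp_inv_smul_sub (fun u => K u * ‖u‖) θ hh.le, smul_eq_mul, pow_succ]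
          ring

theorem integrable_weightedKernelSum (hK : Integrable K μ) (θ : ι → E) (w : ι → ℝ) (hh : h ≠ 0) :
    Integrable (weightedKernelSum K h θ w) μ :=
  integrable_finsetSum _ fun i _ => (hK.comp_inv_smul_sub (θ i) hh).mul_const _

theorem integral_weightedKernelSum (hK : Integrable K μ) (θ : ι → E) (w : ι → ℝ) (hh : 0 < h) :
    ∫ x, weightedKernelSum K h θ w x ∂μ = h ^ finrank ℝ E * (∫ u, K u ∂μ) * ∑ i, w i := by
  simp only [weightedKernelSum]
  rw [integral_finsetSum _ fun i _ =>
    (hK.comp_inv_smul_sub (θ i) hh.ne').mul_const _, Finset.mul_sum]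
  refine Finset.sum_congr rfl fun i _ => ?_
  rw [integral_mul_const, integral_comp_inv_smul_sub K (θ i) hh.le, smul_eq_mul]

theorem integrable_and_integral_abs_kernelSum_mul_sub_weightedKernelSum_le (hK0 : ∀ u, 0 ≤ K u)
    (hK : Integrable K μ) (hKmom : Integrable (fun u => K u * ‖u‖) μ) (hL : Measurable L)
    (hLlip : ∀ x y, |L x - L y| ≤ M * ‖x - y‖) (θ : ι → E) (hh : 0 < h) :
    Integrable (fun x => kernelSum K h θ x * L x - weightedKernelSum K h θ (L ∘ θ) x) μ ∧
      ∫ x, |kernelSum K h θ x * L x - weightedKernelSum K h θ (L ∘ θ) x| ∂μ ≤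
        Fintype.card ι * (M * (h ^ (finrank ℝ E + 1) * ∫ u, K u * ‖u‖ ∂μ)) := by
  simp only [kernelSum_mul_sub_weightedKernelSum]
  have hterm i := integrable_and_integral_abs_kernel_mul_sub_le hK0 hK hKmom hL hLlip (θ i) hh
  refine ⟨integrable_finsetSum _ fun i _ => (hterm i).1, ?_⟩
  calc ∫ x, |∑ i, K (h⁻¹ • (x - θ i)) * (L x - L (θ i))| ∂μ
      ≤ ∫ x, ∑ i, |K (h⁻¹ • (x - θ i)) * (L x - L (θ i))| ∂μ :=
        integral_mono_of_nonneg (.of_forall fun _ => abs_nonneg _)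
          (integrable_finsetSum _ fun i _ => (hterm i).1.abs)
          (.of_forall fun _ => Finset.abs_sum_le_sum_abs _ _)
    _ = ∑ i, ∫ x, |K (h⁻¹ • (x - θ i)) * (L x - L (θ i))| ∂μ :=
        integral_finsetSum _ fun i _ => (hterm i).1.abs
    _ ≤ ∑ _i : ι, M * (h ^ (finrank ℝ E + 1) * ∫ u, K u * ‖u‖ ∂μ) :=
        Finset.sum_le_sum fun i _ => (hterm i).2
    _ = _ := by rw [Finset.sum_const, Finset.card_univ, nsmul_eq_mul]

theorem integral_abs_normalized_weightedKernelSum_sub_le (hK0 : ∀ u, 0 ≤ K u)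
    (hK1 : ∫ u, K u ∂μ = 1) (hKmom : Integrable (fun u => K u * ‖u‖) μ) (hL0 : ∀ x, 0 ≤ L x)
    (hL : Measurable L) (hLlip : ∀ x y, |L x - L y| ≤ M * ‖x - y‖) (θ : ι → E) (hh : 0 < h)
    (hLsum : 0 < ∑ i, L (θ i)) (hFpos : 0 < ∫ x, kernelSum K h θ x * L x ∂μ) :
    ∫ x, |weightedKernelSum K h θ (L ∘ θ) x / (∫ y, weightedKernelSum K h θ (L ∘ θ) y ∂μ) -
        kernelSum K h θ x * L x / ∫ y, kernelSum K h θ y * L y ∂μ| ∂μ ≤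
      2 * M * h * (∫ u, K u * ‖u‖ ∂μ) / ((Fintype.card ι : ℝ)⁻¹ * ∑ i, L (θ i)) := by
  have hK : Integrable K μ := .of_integral_ne_zero (by simp [hK1])
  obtain ⟨hD_int, hD_le⟩ :=
    integrable_and_integral_abs_kernelSum_mul_sub_weightedKernelSum_le hK0 hK hKmom hL hLlip θ hh
  have hG_int := integrable_weightedKernelSum hK θ (L ∘ θ) hh.ne'
  have hG_val : ∫ x, weightedKernelSum K h θ (L ∘ θ) x ∂μ = h ^ finrank ℝ E * ∑ i, L (θ i) := by
    simpa [hK1] using integral_weightedKernelSum (μ := μ) hK θ (L ∘ θ) hh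
  have hF_nonneg (x : E) : 0 ≤ kernelSum K h θ x * L x :=
    mul_nonneg (Finset.sum_nonneg fun i _ => hK0 _) (hL0 x)
  calc _ ≤ 2 * (∫ x, |kernelSum K h θ x * L x - weightedKernelSum K h θ (L ∘ θ) x| ∂μ) /
        ∫ y, weightedKernelSum K h θ (L ∘ θ) y ∂μ :=
        integral_abs_div_integral_sub_div_integral_le
          ((hG_int.add hD_int).congr (.of_forall fun x => add_sub_cancel _ _))
          hG_int (.of_forall hF_nonneg) hFpos (by rw [hG_val]; positivity)
    _ ≤ 2 * (Fintype.card ι * (M * (h ^ (finrank ℝ E + 1) * ∫ u, K u * ‖u‖ ∂μ))) /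
        (h ^ finrank ℝ E * ∑ i, L (θ i)) := by
        rw [hG_val]
        gcongr
    _ = _ := by field_simp; ring

end KernelSmoothing

theorem stmt_6_general
    (d B : ℕ) (hB : 1 ≤ B)
    (θp : Fin B → EuclideanSpace ℝ (Fin d))
    (K : EuclideanSpace ℝ (Fin d) → ℝ)
    (hKnonneg : ∀ u, 0 ≤ K u) (hKint : ∫ u, K u = 1)
    (hKmom : Integrable (fun u => K u * ‖u‖))
    (h : ℝ) (hh : 0 < h)
    (M : ℝ)
    (L : EuclideanSpace ℝ (Fin d) → ℝ)
    (hLnonneg : ∀ x, 0 ≤ L x) (hLmeas : Measurable L)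
    (hLlip : ∀ x y, |L x - L y| ≤ M * ‖x - y‖)
    (hLsum : 0 < ∑ i, L (θp i))
    (πK : EuclideanSpace ℝ (Fin d) → ℝ)
    (hπK : ∀ x, πK x = (1 / (B * h ^ d)) * ∑ i, K (h⁻¹ • (x - θp i)))
    (hpos : 0 < ∫ x, πK x * L x)
    (πtil : EuclideanSpace ℝ (Fin d) → ℝ)
    (hπtil : ∀ x, πtil x =
      (∑ i, K (h⁻¹ • (x - θp i)) * L (θp i)) / (h ^ d * ∑ i, L (θp i)))
    (πhat : EuclideanSpace ℝ (Fin d) → ℝ)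
    (hπhat : ∀ x, πhat x = πK x * L x / ∫ τ, πK τ * L τ) :
    (∫ x, |πtil x - πhat x|) ≤
      2 * M * h * (∫ u, K u * ‖u‖) / ((B : ℝ)⁻¹ * ∑ i, L (θp i)) := by
  have hK : Integrable K := .of_integral_ne_zero (by simp [hKint])
  have hc : 0 < 1 / ((B : ℝ) * h ^ d) := by
    have : (0 : ℝ) < B := by exact_mod_cast hB
    positivity
  have hπK_L (x : EuclideanSpace ℝ (Fin d)) :
      πK x * L x = 1 / (B * h ^ d) * (kernelSum K h θp x * L x) := by
    rw [hπK, mul_assoc, kernelSum]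
  have hπK_L_int : ∫ x, πK x * L x = 1 / (B * h ^ d) * ∫ x, kernelSum K h θp x * L x := by
    simp only [hπK_L, integral_const_mul]
  have hG_val : ∫ x, weightedKernelSum K h θp (L ∘ θp) x = h ^ d * ∑ i, L (θp i) := by
    simpa [hKint] using integral_weightedKernelSum hK θp (L ∘ θp) hh
  have hπtil_eq (x : EuclideanSpace ℝ (Fin d)) :
      πtil x = weightedKernelSum K h θp (L ∘ θp) x / ∫ y, weightedKernelSum K h θp (L ∘ θp) y := by
    rw [hπtil, hG_val, weightedKernelSum]
    rfl
  have hπhat_eq (x : EuclideanSpace ℝ (Fin d)) :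
      πhat x = kernelSum K h θp x * L x / ∫ y, kernelSum K h θp y * L y := by
    rw [hπhat, hπK_L, hπK_L_int, mul_div_mul_left _ _ hc.ne']
  rw [hπK_L_int] at hpos
  simp only [hπtil_eq, hπhat_eq]
  simpa [finrank_euclideanSpace_fin] using integral_abs_normalized_weightedKernelSum_sub_le
    hKnonneg hKint hKmom hLnonneg hLmeas hLlip θp hh hLsum (pos_of_mul_pos_right hpos hc.le)

/-- the quantitative bound
`∫ |π̃ − π̂| ≤ 2·M·h·∫ K(u)‖u‖ du / (B⁻¹ Σᵢ L(θᵢ))`. -/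
theorem stmt_6
    (d B : ℕ) (hd : 1 ≤ d) (hB : 1 ≤ B)
    (θp : Fin B → EuclideanSpace ℝ (Fin d))
    (K : EuclideanSpace ℝ (Fin d) → ℝ)
    (hKmeas : Measurable K) (hKnonneg : ∀ u, 0 ≤ K u) (hKint : ∫ u, K u = 1)
    (hKmom : Integrable (fun u => K u * ‖u‖))
    (h : ℝ) (hh : 0 < h)
    (M : ℝ) (hM : 0 < M)
    (L : EuclideanSpace ℝ (Fin d) → ℝ)
    (hLnonneg : ∀ x, 0 ≤ L x) (hLmeas : Measurable L)
    (hLlip : ∀ x y, |L x - L y| ≤ M * ‖x - y‖)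
    (hLbdd : BddAbove (Set.range L))
    (hLsum : 0 < ∑ i, L (θp i))
    (πK : EuclideanSpace ℝ (Fin d) → ℝ)
    (hπK : ∀ x, πK x = (1 / (B * h ^ d)) * ∑ i, K (h⁻¹ • (x - θp i)))
    (hpos : 0 < ∫ x, πK x * L x)
    (πtil : EuclideanSpace ℝ (Fin d) → ℝ)
    (hπtil : ∀ x, πtil x =
      (∑ i, K (h⁻¹ • (x - θp i)) * L (θp i)) / (h ^ d * ∑ i, L (θp i)))
    (πhat : EuclideanSpace ℝ (Fin d) → ℝ)
    (hπhat : ∀ x, πhat x = πK x * L x / ∫ τ, πK τ * L τ) :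
    (∫ x, |πtil x - πhat x|) ≤
      2 * M * h * (∫ u, K u * ‖u‖) / ((B : ℝ)⁻¹ * ∑ i, L (θp i)) :=
  stmt_6_general d B hB θp K hKnonneg hKint hKmom h hh M L hLnonneg hLmeas hLlip hLsum πK hπK hpos
    πtil hπtil πhat hπhat
end

section
/- For every ε ∈ (0,1), the ε-mixing time of the graph-enabled discretized MCMC satisfies t_{mix,d}(ε) ≤ ⌈ ( max_{i ∈ {1,…,B}} L(i) / ( ρ B^{−1} Σ_{i=1}^B L(i) ) ) · log(1/ε) ⌉. -/
/-!
Every proposal probability is at least `ρ / B`, so the Metropolis kernel satisfies the Doeblin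
minorization `P i j ≥ δ π j` with `δ = ρ B⁻¹ (∑ L) / max L`: off the diagonal because
`min (q j i L j) (q i j L i) ≥ (ρ / B) L i L j / max L`, on the diagonal because the rejected mass
keeps at least `q i i`. Detailed balance makes `π` stationary. Since `μ P - π = (μ - π) P` and
`∑ (μ - π) = 0`, we may replace `P` by `P - δ 1 πᵀ`, whose rows are nonnegative with mass `1 - δ`;
hence each step contracts the total variation distance by `1 - δ`, and
`(1 - δ) ^ t ≤ exp (-δ t) ≤ ε` once `t ≥ log ε⁻¹ / δ`.
-/

open Finset Matrix

section TotalVariation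

variable {ι : Type*}

noncomputable def tvDist (μ ν : ι → ℝ) : ℝ :=
  ⨆ A : Finset ι, |∑ j ∈ A, μ j - ∑ j ∈ A, ν j|

theorem abs_sum_sub_le_tvDist [Finite ι] (μ ν : ι → ℝ) (A : Finset ι) :
    |∑ j ∈ A, μ j - ∑ j ∈ A, ν j| ≤ tvDist μ ν :=
  le_ciSup (f := fun A : Finset ι => |∑ j ∈ A, μ j - ∑ j ∈ A, ν j|)
    (Set.finite_range _).bddAbove A

theorem tvDist_le {μ ν : ι → ℝ} {r : ℝ}
    (h : ∀ A : Finset ι, |∑ j ∈ A, μ j - ∑ j ∈ A, ν j| ≤ r) : tvDist μ ν ≤ r :=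
  ciSup_le h

theorem tvDist_le_one [Fintype ι] {μ ν : ι → ℝ} (hμ : ∀ i, 0 ≤ μ i) (hμ1 : ∑ i, μ i = 1)
    (hν : ∀ i, 0 ≤ ν i) (hν1 : ∑ i, ν i = 1) : tvDist μ ν ≤ 1 :=
  tvDist_le fun _ => abs_sub_le_of_nonneg_of_le (sum_nonneg fun i _ => hμ i)
    (hμ1 ▸ sum_le_univ_sum_of_nonneg hμ) (sum_nonneg fun i _ => hν i)
    (hν1 ▸ sum_le_univ_sum_of_nonneg hν)

theorem sum_mul_le_of_forall_sum_le [Fintype ι] {c g : ι → ℝ} {a T : ℝ} (ha : 0 ≤ a)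
    (hg : ∀ i, 0 ≤ g i) (hga : ∀ i, g i ≤ a) (hc : ∀ A : Finset ι, ∑ i ∈ A, c i ≤ T) :
    ∑ i, c i * g i ≤ a * T := by
  calc ∑ i, c i * g i ≤ ∑ i, a * (if 0 ≤ c i then c i else 0) := by
        refine sum_le_sum fun i _ => ?_
        split_ifs with hci
        · rw [mul_comm a]; exact mul_le_mul_of_nonneg_left (hga i) hci
        · rw [mul_zero]; exact mul_nonpos_of_nonpos_of_nonneg (le_of_not_ge hci) (hg i)
    _ = a * ∑ i with 0 ≤ c i, c i := by rw [← mul_sum, sum_filter]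
    _ ≤ a * T := mul_le_mul_of_nonneg_left (hc _) ha

theorem abs_sum_mul_le_of_forall_abs_sum_le [Fintype ι] {c g : ι → ℝ} {a T : ℝ} (ha : 0 ≤ a)
    (hg : ∀ i, 0 ≤ g i) (hga : ∀ i, g i ≤ a) (hc : ∀ A : Finset ι, |∑ i ∈ A, c i| ≤ T) :
    |∑ i, c i * g i| ≤ a * T := by
  have upper := sum_mul_le_of_forall_sum_le ha hg hga fun A => (le_abs_self _).trans (hc A)
  have lower := sum_mul_le_of_forall_sum_le (c := -c) ha hg hga fun A => by
    simpa only [Pi.neg_apply, sum_neg_distrib, abs_neg] using (neg_le_abs _).trans (hc A)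
  simp only [Pi.neg_apply, neg_mul, sum_neg_distrib] at lower
  exact abs_le.2 ⟨by linarith, upper⟩

end TotalVariation

section Doeblin

variable {ι : Type*} [Fintype ι] {P : Matrix ι ι ℝ} {π : ι → ℝ} {δ : ℝ}

theorem sum_vecMul_of_sum_row_eq_one (hP : ∀ i, ∑ j, P i j = 1) (μ : ι → ℝ) :
    ∑ j, (μ ᵥ* P) j = ∑ i, μ i := by
  simp only [vecMul, dotProduct]
  rw [sum_comm]
  simp [← mul_sum, hP]

theorem le_one_of_minorization [Nonempty ι] (hP : ∀ i, ∑ j, P i j = 1) (hπ : ∑ i, π i = 1)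
    (hmin : ∀ i j, δ * π j ≤ P i j) : δ ≤ 1 := by
  obtain ⟨i⟩ := ‹Nonempty ι›
  calc δ = ∑ j, δ * π j := by rw [← mul_sum, hπ, mul_one]
    _ ≤ ∑ j, P i j := sum_le_sum fun j _ => hmin i j
    _ = 1 := hP i

theorem tvDist_vecMul_le (hδ : δ ≤ 1) (hP : ∀ i, ∑ j, P i j = 1) (hπP : π ᵥ* P = π)
    (hπ : ∑ i, π i = 1) (hmin : ∀ i j, δ * π j ≤ P i j) {μ : ι → ℝ} (hμ : ∑ i, μ i = 1) :
    tvDist (μ ᵥ* P) π ≤ (1 - δ) * tvDist μ π := by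
  refine tvDist_le fun A => ?_
  set g : ι → ℝ := fun i => ∑ j ∈ A, (P i j - δ * π j)
  have hmass : ∑ i, (μ i - π i) = 0 := by rw [sum_sub_distrib, hμ, hπ, sub_self]
  have hdiff : ∑ j ∈ A, (μ ᵥ* P) j - ∑ j ∈ A, π j = ∑ i, (μ i - π i) * g i := by
    simp only [g, sum_sub_distrib, ← mul_sum, mul_sub, ← sum_mul, hmass, zero_mul, sub_zero]
    conv_lhs => rw [← hπP]
    simp only [vecMul, dotProduct, sub_mul, sum_sub_distrib, mul_sum]
    rw [sum_comm, sum_comm (s := A)]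
  rw [hdiff]
  refine abs_sum_mul_le_of_forall_abs_sum_le (sub_nonneg.2 hδ)
    (fun i => sum_nonneg fun j _ => sub_nonneg.2 (hmin i j)) (fun i => ?_)
    fun B => by simpa only [sum_sub_distrib] using abs_sum_sub_le_tvDist μ π B
  calc g i ≤ ∑ j, (P i j - δ * π j) :=
        sum_le_univ_sum_of_nonneg fun j => sub_nonneg.2 (hmin i j)
    _ = 1 - δ := by rw [sum_sub_distrib, hP, ← mul_sum, hπ, mul_one]

theorem tvDist_le_one_sub_pow [Nonempty ι] (hP : ∀ i, ∑ j, P i j = 1) (hπP : π ᵥ* P = π)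
    (hπ0 : ∀ i, 0 ≤ π i) (hπ : ∑ i, π i = 1) (hmin : ∀ i j, δ * π j ≤ P i j)
    {ν : ℕ → ι → ℝ} (hν : ∀ t, ν (t + 1) = ν t ᵥ* P) (hν0 : ∀ i, 0 ≤ ν 0 i)
    (hν1 : ∑ i, ν 0 i = 1) (t : ℕ) : tvDist (ν t) π ≤ (1 - δ) ^ t := by
  have hδ := le_one_of_minorization hP hπ hmin
  have hmass : ∀ t, ∑ i, ν t i = 1 := fun t => by
    induction t with
    | zero => exact hν1
    | succ t ih => rw [hν, sum_vecMul_of_sum_row_eq_one hP, ih]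
  induction t with
  | zero => simpa using tvDist_le_one hν0 hν1 hπ0 hπ
  | succ t ih =>
    calc tvDist (ν (t + 1)) π ≤ (1 - δ) * tvDist (ν t) π := by
          rw [hν]; exact tvDist_vecMul_le hδ hP hπP hπ hmin (hmass t)
      _ ≤ (1 - δ) * (1 - δ) ^ t := mul_le_mul_of_nonneg_left ih (sub_nonneg.2 hδ)
      _ = (1 - δ) ^ (t + 1) := (pow_succ' _ _).symm

theorem one_sub_pow_ceil_le {δ ε : ℝ} (hδ : 0 < δ) (hδ1 : δ ≤ 1) (hε : 0 < ε) :
    (1 - δ) ^ ⌈Real.log ε⁻¹ / δ⌉₊ ≤ ε := by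
  set T := ⌈Real.log ε⁻¹ / δ⌉₊
  have hT : -Real.log ε ≤ δ * T := by
    rw [← Real.log_inv, ← div_le_iff₀' hδ]; exact Nat.le_ceil _
  calc (1 - δ) ^ T ≤ Real.exp (-δ) ^ T :=
        pow_le_pow_left₀ (sub_nonneg.2 hδ1) (Real.one_sub_le_exp_neg δ) T
    _ = Real.exp (-(δ * T)) := by rw [← Real.exp_nat_mul]; ring_nf
    _ ≤ Real.exp (Real.log ε) := Real.exp_le_exp.2 (by linarith)
    _ = ε := Real.exp_log hε

theorem tvDist_le_of_minorization [Nonempty ι] (hP : ∀ i, ∑ j, P i j = 1) (hπP : π ᵥ* P = π)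
    (hπ0 : ∀ i, 0 ≤ π i) (hπ : ∑ i, π i = 1) (hδ : 0 < δ) (hmin : ∀ i j, δ * π j ≤ P i j)
    {ν : ℕ → ι → ℝ} (hν : ∀ t, ν (t + 1) = ν t ᵥ* P) (hν0 : ∀ i, 0 ≤ ν 0 i)
    (hν1 : ∑ i, ν 0 i = 1) {ε : ℝ} (hε : 0 < ε) :
    tvDist (ν ⌈Real.log ε⁻¹ / δ⌉₊) π ≤ ε :=
  (tvDist_le_one_sub_pow hP hπP hπ0 hπ hmin hν hν0 hν1 _).trans
    (one_sub_pow_ceil_le hδ (le_one_of_minorization hP hπ hmin) hε)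

end Doeblin

section Metropolis

variable {ι : Type*} {q : ι → ι → ℝ} {L : ι → ℝ}

noncomputable def metropolisRate (q : ι → ι → ℝ) (L : ι → ℝ) (i j : ι) : ℝ :=
  q i j * min (q j i * L j / (q i j * L i)) 1

theorem metropolisRate_eq_min_div {i j : ι} (hq : 0 < q i j) (hL : 0 < L i) :
    metropolisRate q L i j = min (q j i * L j) (q i j * L i) / L i := by
  have hqL : 0 < q i j * L i := mul_pos hq hL
  rw [metropolisRate, eq_div_iff hL.ne', mul_right_comm, mul_min_of_nonneg _ _ hqL.le,
    mul_div_cancel₀ _ hqL.ne', mul_one]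

theorem metropolisRate_le {i j : ι} (hq : 0 ≤ q i j) : metropolisRate q L i j ≤ q i j :=
  mul_le_of_le_one_right hq (min_le_right _ _)

variable [Fintype ι] [DecidableEq ι]

noncomputable def metropolisKernel (q : ι → ι → ℝ) (L : ι → ℝ) : Matrix ι ι ℝ :=
  Matrix.of fun i j =>
    if i = j then 1 - ∑ k ∈ univ.erase i, metropolisRate q L i k else metropolisRate q L i j

theorem metropolisKernel_apply_self (i : ι) :
    metropolisKernel q L i i = 1 - ∑ k ∈ univ.erase i, metropolisRate q L i k := by
  simp [metropolisKernel]

theorem metropolisKernel_apply_of_ne {i j : ι} (h : i ≠ j) :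
    metropolisKernel q L i j = metropolisRate q L i j := by
  simp [metropolisKernel, h]

theorem sum_metropolisKernel_row (i : ι) : ∑ j, metropolisKernel q L i j = 1 := by
  rw [← add_sum_erase _ _ (mem_univ i), metropolisKernel_apply_self,
    sum_congr rfl fun j hj => metropolisKernel_apply_of_ne (ne_of_mem_erase hj).symm,
    sub_add_cancel]

theorem metropolisKernel_detailedBalance (hq : ∀ i j, 0 < q i j) (hL : ∀ i, 0 < L i) (i j : ι) :
    L i * metropolisKernel q L i j = L j * metropolisKernel q L j i := by
  rcases eq_or_ne i j with rfl | hij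
  · rfl
  rw [metropolisKernel_apply_of_ne hij, metropolisKernel_apply_of_ne hij.symm,
    metropolisRate_eq_min_div (hq i j) (hL i), metropolisRate_eq_min_div (hq j i) (hL j),
    mul_div_cancel₀ _ (hL i).ne', mul_div_cancel₀ _ (hL j).ne', min_comm]

theorem vecMul_metropolisKernel (hq : ∀ i j, 0 < q i j) (hL : ∀ i, 0 < L i) :
    L ᵥ* metropolisKernel q L = L := by
  ext j
  simp only [vecMul, dotProduct, metropolisKernel_detailedBalance hq hL _ j, ← mul_sum,
    sum_metropolisKernel_row, mul_one]

theorem le_metropolisKernel_self {i : ι} (hq : ∀ j, 0 ≤ q i j) (hq1 : ∑ j, q i j = 1) :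
    q i i ≤ metropolisKernel q L i i := by
  rw [metropolisKernel_apply_self, ← hq1, ← add_sum_erase _ _ (mem_univ i), add_sub_assoc,
    le_add_iff_nonneg_right, sub_nonneg]
  exact sum_le_sum fun j _ => metropolisRate_le (hq j)

theorem mul_div_le_metropolisKernel {c M : ℝ} (hc : 0 < c) (hcq : ∀ i j, c ≤ q i j)
    (hq1 : ∀ i, ∑ j, q i j = 1) (hL : ∀ i, 0 < L i) (hLM : ∀ i, L i ≤ M) (i j : ι) :
    c * L j / M ≤ metropolisKernel q L i j := by
  have hq : ∀ i j, 0 < q i j := fun i j => hc.trans_le (hcq i j)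
  have hM : 0 < M := (hL j).trans_le (hLM j)
  rcases eq_or_ne i j with rfl | hij
  · calc c * L i / M ≤ c := by
          rw [mul_div_assoc]; exact mul_le_of_le_one_right hc.le ((div_le_one hM).2 (hLM i))
      _ ≤ q i i := hcq i i
      _ ≤ metropolisKernel q L i i := le_metropolisKernel_self (fun j => (hq i j).le) (hq1 i)
  rw [metropolisKernel_apply_of_ne hij, metropolisRate_eq_min_div (hq i j) (hL i),
    div_le_div_iff₀ hM (hL i)]
  calc c * L j * L i = c * (min (L j) (L i) * max (L j) (L i)) := by rw [min_mul_max, mul_assoc]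
    _ ≤ c * (min (L j) (L i) * M) := by
        gcongr
        · exact le_min (hL j).le (hL i).le
        · exact max_le (hLM j) (hLM i)
    _ = min (c * L j) (c * L i) * M := by rw [← mul_min_of_nonneg _ _ hc.le, mul_assoc]
    _ ≤ min (q j i * L j) (q i j * L i) * M := by
        gcongr
        · exact (hL j).le
        · exact hcq j i
        · exact (hL i).le
        · exact hcq i j

theorem tvDist_metropolisKernel_le [Nonempty ι] {c M ε : ℝ} (hc : 0 < c)
    (hcq : ∀ i j, c ≤ q i j) (hq1 : ∀ i, ∑ j, q i j = 1) (hL : ∀ i, 0 < L i) (hLM : ∀ i, L i ≤ M)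
    {ν : ℕ → ι → ℝ}
    (hν : ∀ t, ν (t + 1) = ν t ᵥ* metropolisKernel q L) (hν0 : ∀ i, 0 ≤ ν 0 i)
    (hν1 : ∑ i, ν 0 i = 1) (hε : 0 < ε) :
    tvDist (ν ⌈M / (c * ∑ i, L i) * Real.log ε⁻¹⌉₊) (fun j => L j / ∑ i, L i) ≤ ε := by
  have hS : 0 < ∑ i, L i := sum_pos (fun i _ => hL i) univ_nonempty
  have hM : 0 < M := (hL (Classical.arbitrary ι)).trans_le (hLM _)
  have hq : ∀ i j, 0 < q i j := fun i j => hc.trans_le (hcq i j)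
  have hπ : (fun j => L j / ∑ i, L i) = (∑ i, L i)⁻¹ • L := funext fun j => div_eq_inv_mul _ _
  have hT : M / (c * ∑ i, L i) * Real.log ε⁻¹ = Real.log ε⁻¹ / (c * (∑ i, L i) / M) := by
    field_simp
  rw [hT]
  refine tvDist_le_of_minorization sum_metropolisKernel_row ?_ (fun j => (div_pos (hL j) hS).le)
    (by rw [← sum_div, div_self hS.ne']) (by positivity) (fun i j => ?_) hν hν0 hν1 hε
  · rw [hπ, smul_vecMul, vecMul_metropolisKernel hq hL]
  · calc c * (∑ i, L i) / M * (L j / ∑ i, L i) = c * L j / M := by field_simp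
      _ ≤ metropolisKernel q L i j := mul_div_le_metropolisKernel hc hcq hq1 hL hLM i j

end Metropolis

section GraphProposal

variable {ι : Type*} [Fintype ι]

noncomputable def graphProposal (ρ : ℝ) (E : ι → ι → Prop) [DecidableRel E] (i j : ι) : ℝ :=
  ρ / Fintype.card ι + (1 - ρ) * (if E i j then 1 else 0) / #{k | E i k}

variable {ρ : ℝ} {E : ι → ι → Prop} [DecidableRel E]

theorem div_card_le_graphProposal (hρ : ρ ≤ 1) (i j : ι) :
    ρ / Fintype.card ι ≤ graphProposal ρ E i j :=
  le_add_of_nonneg_right <| div_nonneg (mul_nonneg (sub_nonneg.2 hρ) (by split_ifs <;> norm_num))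
    (Nat.cast_nonneg _)

theorem sum_graphProposal {i : ι} (hi : #{k | E i k} ≠ 0) :
    ∑ j, graphProposal ρ E i j = 1 := by
  have : Nonempty ι := ⟨(card_ne_zero.1 hi).choose⟩
  have hcard : (Fintype.card ι : ℝ) ≠ 0 := Nat.cast_ne_zero.2 Fintype.card_ne_zero
  have hdeg : (#{k | E i k} : ℝ) ≠ 0 := Nat.cast_ne_zero.2 hi
  simp only [graphProposal, sum_add_distrib, sum_const, card_univ, nsmul_eq_mul, ← sum_div,
    ← mul_sum, sum_boole]
  field_simp
  ring

end GraphProposal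

theorem stmt_9_general
    (B : ℕ) (hB : 1 ≤ B)
    (E : Fin B → Fin B → Prop) [DecidableRel E]
    (D : Fin B → ℕ)
    (hD : ∀ i, D i = (Finset.univ.filter (fun j => E i j)).card)
    (hD1 : ∀ i, 1 ≤ D i)
    (ρ : ℝ) (hρ0 : 0 < ρ) (hρ1 : ρ < 1)
    (q : Fin B → Fin B → ℝ)
    (hq : ∀ i j, q i j = ρ / B + (1 - ρ) * (if E i j then (1 : ℝ) else 0) / (D i))
    (L : Fin B → ℝ) (hL : ∀ i, 0 < L i)
    (P : Fin B → Fin B → ℝ)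
    (hPoff : ∀ i j, i ≠ j → P i j = q i j * min (q j i * L j / (q i j * L i)) 1)
    (hPdiag : ∀ i, P i i = 1 - ∑ j ∈ Finset.univ.erase i, P i j)
    (πd : Fin B → ℝ) (hπd : ∀ j, πd j = L j / ∑ ℓ, L ℓ)
    -- `νt t` is the distribution of the chain at time `t`, started from the uniform distribution
    (νt : ℕ → Fin B → ℝ)
    (hν0 : ∀ i, νt 0 i = 1 / B)
    (hνrec : ∀ t j, νt (t + 1) j = ∑ i, νt t i * P i j)
    -- total variation distance to stationarity at time `t`
    (TV : ℕ → ℝ)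
    (hTV : ∀ t, TV t = ⨆ A : Finset (Fin B), |∑ j ∈ A, νt t j - ∑ j ∈ A, πd j|)
    (ε : ℝ) (hε0 : 0 < ε)
    -- the ε-mixing time
    (tmix : ℕ) (htmix : tmix = sInf {t : ℕ | TV t ≤ ε}) :
    tmix ≤ ⌈(Finset.univ.sup' ⟨⟨0, hB⟩, Finset.mem_univ _⟩ L /
      (ρ * (B : ℝ)⁻¹ * ∑ i, L i)) * Real.log ε⁻¹⌉₊ := by
  have : Nonempty (Fin B) := ⟨⟨0, hB⟩⟩
  have hq' : q = graphProposal ρ E := by ext i j; simp [hq, hD, graphProposal]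
  have hcq : ∀ i j, ρ / B ≤ q i j := by simpa [hq'] using div_card_le_graphProposal (E := E) hρ1.le
  have hq1 : ∀ i, ∑ j, q i j = 1 := fun i => by
    rw [hq']; exact sum_graphProposal (by rw [← hD]; exact Nat.one_le_iff_ne_zero.1 (hD1 i))
  have hP : P = metropolisKernel q L := by
    ext i j
    rcases eq_or_ne i j with rfl | hij
    · rw [hPdiag, metropolisKernel_apply_self]
      exact congrArg _ (sum_congr rfl fun j hj => hPoff i j (ne_of_mem_erase hj).symm)
    · rw [hPoff i j hij, metropolisKernel_apply_of_ne hij, metropolisRate]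
  have hB0 : (B : ℝ) ≠ 0 := Nat.cast_ne_zero.2 (by omega)
  have hTV' := tvDist_metropolisKernel_le (M := univ.sup' ⟨⟨0, hB⟩, mem_univ _⟩ L)
    (by positivity) hcq hq1 hL (fun i => le_sup' L (mem_univ i)) (fun t => funext (hP ▸ hνrec t))
    (fun i => by rw [hν0]; positivity) (by simp [hν0, hB0]) hε0
  rw [← funext hπd] at hTV'
  rw [htmix, ← div_eq_mul_inv]
  exact Nat.sInf_le ((hTV _).trans_le hTV')

/-- mixing time bound for the graph-enabled discretized MCMC:
`t_mix(ε) ≤ ⌈ (max L / (ρ B⁻¹ Σ L)) log(1/ε) ⌉`. -/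
theorem stmt_9
    (B : ℕ) (hB : 1 ≤ B)
    (E : Fin B → Fin B → Prop) [DecidableRel E]
    (hEsymm : ∀ i j, E i j → E j i) (hEirr : ∀ i, ¬ E i i)
    (D : Fin B → ℕ)
    (hD : ∀ i, D i = (Finset.univ.filter (fun j => E i j)).card)
    (hD1 : ∀ i, 1 ≤ D i)
    (ρ : ℝ) (hρ0 : 0 < ρ) (hρ1 : ρ < 1)
    (q : Fin B → Fin B → ℝ)
    (hq : ∀ i j, q i j = ρ / B + (1 - ρ) * (if E i j then (1 : ℝ) else 0) / (D i))
    (L : Fin B → ℝ) (hL : ∀ i, 0 < L i)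
    (P : Fin B → Fin B → ℝ)
    (hPoff : ∀ i j, i ≠ j → P i j = q i j * min (q j i * L j / (q i j * L i)) 1)
    (hPdiag : ∀ i, P i i = 1 - ∑ j ∈ Finset.univ.erase i, P i j)
    (πd : Fin B → ℝ) (hπd : ∀ j, πd j = L j / ∑ ℓ, L ℓ)
    -- `νt t` is the distribution of the chain at time `t`, started from the uniform distribution
    (νt : ℕ → Fin B → ℝ)
    (hν0 : ∀ i, νt 0 i = 1 / B)
    (hνrec : ∀ t j, νt (t + 1) j = ∑ i, νt t i * P i j)
    -- total variation distance to stationarity at time `t`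
    (TV : ℕ → ℝ)
    (hTV : ∀ t, TV t = ⨆ A : Finset (Fin B), |∑ j ∈ A, νt t j - ∑ j ∈ A, πd j|)
    (ε : ℝ) (hε0 : 0 < ε) (hε1 : ε < 1)
    -- the ε-mixing time
    (tmix : ℕ) (htmix : tmix = sInf {t : ℕ | TV t ≤ ε}) :
    tmix ≤ ⌈(Finset.univ.sup' ⟨⟨0, hB⟩, Finset.mem_univ _⟩ L /
      (ρ * (B : ℝ)⁻¹ * ∑ i, L i)) * Real.log ε⁻¹⌉₊ :=
  stmt_9_general B hB E D hD hD1 ρ hρ0 hρ1 q hq L hL P hPoff hPdiag πd hπd νt hν0 hνrec TV hTV ε hε0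
    tmix htmix
end
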